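/- arXiv:1302.2359 — 2 statements merged into one kernel-verified Lean document; each statement's English description precedes it below -/
import Mathlib

section
/- For |q|<1, φ(-q) = E(q)²/E(q²), where φ(q) = ∑_{n∈ℤ} q^{n²} and E(q) = ∏_{n≥1}(1-q^n). -/
open scoped BigOperators

noncomputable def E (q : ℂ) : ℂ := ∏' n : ℕ, (1 - q ^ (n + 1))

noncomputable def ramaf (a b : ℂ) : ℂ :=
  ∑' n : ℤ, a ^ (n * (n + 1) / 2) * b ^ (n * (n - 1) / 2)

noncomputable def phi (q : ℂ) : ℂ := ∑' n : ℤ, q ^ (n ^ 2)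

noncomputable def psi (q : ℂ) : ℂ := ∑' n : ℤ, q ^ (2 * n ^ 2 - n)

/-!
Put `y = -q`. The `q`-binomial theorem with `Q = y²` and `x = y^(1-2N)` gives the finite form of
Jacobi's triple product
`∏_{j<N} (1 + y^(2j+1))² = ∑_{|m| ≤ N} y^(m²) [2N, N+m]_{y²}`.
Writing `[m+k, k]_Q = (Q;Q)_{m+k} / ((Q;Q)_k (Q;Q)_m)`, the Gaussian binomials are bounded and
`[2N, N+m]_Q → 1 / E(Q)`, so Tannery's theorem lets `N → ∞` termwise:
`φ(y) = (∏_j (1 + y^(2j+1)))² E(y²)`. Splitting `E(q)` into odd and even factors,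
`E(q) = ∏_j (1 - q^(2j+1)) · E(q²)`, and the two identities combine to `φ(-q) = E(q)² / E(q²)`.
-/

open Finset Filter Topology

def qBinomial {R : Type*} [CommSemiring R] (Q : R) : ℕ → ℕ → R
  | _, 0 => 1
  | 0, _ + 1 => 0
  | n + 1, k + 1 => qBinomial Q n k + Q ^ (k + 1) * qBinomial Q n (k + 1)

/-- `(Q; Q)_n`. -/
def qPochhammer {R : Type*} [CommRing R] (Q : R) (n : ℕ) : R :=
  ∏ j ∈ range n, (1 - Q ^ (j + 1))

lemma choose_two_succ (k : ℕ) : (k + 1).choose 2 = k.choose 2 + k := by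
  rw [Nat.choose_succ_succ, Nat.choose_one_right, add_comm]

lemma two_mul_choose_two_add_self (k : ℕ) : 2 * k.choose 2 + k = k ^ 2 := by
  induction k with
  | zero => rfl
  | succ k ih => rw [choose_two_succ]; linear_combination ih

section CommSemiring

variable {R : Type*} [CommSemiring R] (Q : R)

@[simp] lemma qBinomial_zero_right (n : ℕ) : qBinomial Q n 0 = 1 := by cases n <;> rfl

lemma qBinomial_succ_succ (n k : ℕ) :
    qBinomial Q (n + 1) (k + 1) = qBinomial Q n k + Q ^ (k + 1) * qBinomial Q n (k + 1) := rfl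

lemma qBinomial_eq_zero_of_lt {n k : ℕ} (h : n < k) : qBinomial Q n k = 0 := by
  induction n generalizing k with
  | zero => obtain ⟨k, rfl⟩ := Nat.exists_eq_add_one_of_ne_zero h.ne'; rfl
  | succ n ih =>
    obtain ⟨k, rfl⟩ := Nat.exists_eq_add_one_of_ne_zero (Nat.ne_zero_of_lt h)
    rw [qBinomial_succ_succ, ih (by omega), ih (by omega), mul_zero, add_zero]

@[simp] lemma qBinomial_self (n : ℕ) : qBinomial Q n n = 1 := by
  induction n with
  | zero => rfl
  | succ n ih =>
    rw [qBinomial_succ_succ, ih, qBinomial_eq_zero_of_lt Q n.lt_succ_self, mul_zero, add_zero]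

theorem prod_one_add_mul_pow_eq_sum (x : R) (n : ℕ) :
    ∏ j ∈ range n, (1 + x * Q ^ j) =
      ∑ k ∈ range (n + 1), Q ^ k.choose 2 * qBinomial Q n k * x ^ k := by
  induction n generalizing x with
  | zero => simp
  | succ n ih =>
    set S := ∑ k ∈ range (n + 1), Q ^ k.choose 2 * qBinomial Q n k * (x * Q) ^ k
    have hshift : ∏ j ∈ range n, (1 + x * Q ^ (j + 1)) = S :=
      (prod_congr rfl fun j _ => by ring).trans (ih (x * Q))
    have hlower : x * S =
        ∑ k ∈ range (n + 1), Q ^ (k + 1).choose 2 * qBinomial Q n k * x ^ (k + 1) := by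
      rw [mul_sum]
      exact sum_congr rfl fun k _ => by rw [choose_two_succ]; ring
    have hupper : ∑ k ∈ range (n + 1),
        Q ^ (k + 1).choose 2 * (Q ^ (k + 1) * qBinomial Q n (k + 1)) * x ^ (k + 1) + 1 = S := by
      calc _ = ∑ k ∈ range (n + 2), Q ^ k.choose 2 * qBinomial Q n k * (x * Q) ^ k := by
            rw [sum_range_succ' _ (n + 1)]
            simp only [qBinomial_zero_right, Nat.choose_zero_succ, pow_zero, mul_one]
            exact congrArg (· + 1) (sum_congr rfl fun k _ => by ring)
        _ = S := by rw [sum_range_succ, qBinomial_eq_zero_of_lt Q n.lt_succ_self]; simp [S]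
    rw [prod_range_succ', pow_zero, mul_one, hshift,
      show S * (1 + x) = x * S + S by ring, hlower, ← hupper, sum_range_succ' _ (n + 1)]
    simp only [qBinomial_succ_succ, mul_add, add_mul, sum_add_distrib, qBinomial_zero_right,
      Nat.choose_zero_succ, pow_zero, mul_one, add_assoc]

end CommSemiring

lemma qPochhammer_succ {R : Type*} [CommRing R] (Q : R) (n : ℕ) :
    qPochhammer Q (n + 1) = qPochhammer Q n * (1 - Q ^ (n + 1)) :=
  prod_range_succ _ _

lemma qBinomial_add_mul_qPochhammer {R : Type*} [CommRing R] (Q : R) (m k : ℕ) :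
    qBinomial Q (m + k) k * qPochhammer Q k * qPochhammer Q m = qPochhammer Q (m + k) := by
  induction m generalizing k with
  | zero => simp [qPochhammer]
  | succ m ihm =>
    induction k with
    | zero => simp [qPochhammer]
    | succ k ihk =>
      have h := ihm (k + 1)
      rw [show m + (k + 1) = m + 1 + k by omega, qPochhammer_succ Q k] at h
      rw [qPochhammer_succ Q m] at ihk
      rw [show m + 1 + (k + 1) = m + 1 + k + 1 by omega, qBinomial_succ_succ,
        qPochhammer_succ Q k, qPochhammer_succ Q m, qPochhammer_succ Q (m + 1 + k)]
      linear_combination (1 - Q ^ (k + 1)) * ihk + Q ^ (k + 1) * (1 - Q ^ (m + 1)) * h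

section Field

variable {K : Type*} [Field K]

lemma qBinomial_add_eq_div {Q : K} {m k : ℕ} (hk : qPochhammer Q k ≠ 0)
    (hm : qPochhammer Q m ≠ 0) :
    qBinomial Q (m + k) k = qPochhammer Q (m + k) / (qPochhammer Q k * qPochhammer Q m) := by
  rw [eq_div_iff (mul_ne_zero hk hm), ← mul_assoc, qBinomial_add_mul_qPochhammer]

variable {y : K}

lemma prod_zpow_neg_odd (hy : y ≠ 0) (N : ℕ) :
    ∏ j ∈ range N, y ^ (-(2 * j + 1) : ℤ) = y ^ (-(N : ℤ) ^ 2) := by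
  induction N with
  | zero => simp
  | succ N ih =>
    rw [prod_range_succ, ih, ← zpow_add₀ hy]
    congr 1
    push_cast
    ring

theorem sq_prod_one_add_odd_pow_eq_sum (hy : y ≠ 0) (N : ℕ) :
    (∏ j ∈ range N, (1 + y ^ (2 * j + 1))) ^ 2 =
      ∑ m ∈ Icc (-N : ℤ) N, y ^ (m ^ 2) * qBinomial (y ^ 2) (2 * N) (m + N).toNat := by
  have hpow (e : ℕ) : y ^ e = y ^ (e : ℤ) := (zpow_natCast y e).symm
  set x := y ^ (1 - 2 * N : ℤ)
  -- the first `N` factors of the `q`-binomial product, read backwards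
  have hlower : ∀ j ∈ range N,
      1 + x * (y ^ 2) ^ (N - 1 - j) = y ^ (-(2 * j + 1) : ℤ) * (1 + y ^ (2 * j + 1)) := by
    intro j hj
    have hj : j < N := mem_range.mp hj
    rw [← pow_mul, mul_add, mul_one, hpow, hpow, ← zpow_add₀ hy, ← zpow_add₀ hy,
      show (-(2 * j + 1) : ℤ) + (2 * j + 1 : ℕ) = 0 by push_cast; ring, zpow_zero, add_comm]
    congr 2
    push_cast [Nat.sub_sub, Nat.cast_sub (show 1 + j ≤ N by omega)]
    ring
  have hupper (j : ℕ) : 1 + x * (y ^ 2) ^ (N + j) = 1 + y ^ (2 * j + 1) := by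
    rw [← pow_mul, hpow, hpow, ← zpow_add₀ hy]
    congr 2
    push_cast
    ring
  have hprod : ∏ j ∈ range (2 * N), (1 + x * (y ^ 2) ^ j) =
      y ^ (-(N : ℤ) ^ 2) * (∏ j ∈ range N, (1 + y ^ (2 * j + 1))) ^ 2 := by
    rw [two_mul, prod_range_add, ← prod_range_reflect, prod_congr rfl hlower, prod_mul_distrib,
      prod_zpow_neg_odd hy, prod_congr rfl fun j _ => hupper j]
    ring
  have hterm (k : ℕ) : (y ^ 2) ^ k.choose 2 * qBinomial (y ^ 2) (2 * N) k * x ^ k =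
      y ^ (-(N : ℤ) ^ 2) * (y ^ (((k : ℤ) - N) ^ 2) * qBinomial (y ^ 2) (2 * N) k) := by
    have hk : (2 * k.choose 2 : ℤ) = k ^ 2 - k := by
      linear_combination (norm := push_cast)
        congrArg (Nat.cast : ℕ → ℤ) (two_mul_choose_two_add_self k)
      ring
    rw [← pow_mul, hpow, ← zpow_natCast x, ← zpow_mul, ← mul_assoc, mul_right_comm,
      ← zpow_add₀ hy, ← zpow_add₀ hy]
    congr 2
    push_cast
    linear_combination hk
  have hqbin := prod_one_add_mul_pow_eq_sum (y ^ 2) x (2 * N)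
  rw [hprod, sum_congr rfl fun k _ => hterm k, ← mul_sum] at hqbin
  rw [mul_left_cancel₀ (zpow_ne_zero _ hy) hqbin]
  refine sum_nbij' (fun k => (k : ℤ) - N) (fun m => (m + N).toNat) ?_ ?_ ?_ ?_ ?_ <;>
    intro a ha <;> simp at ha ⊢ <;> omega

end Field

section Complex

variable {z : ℂ}

lemma summable_norm_pow_comp (hz : ‖z‖ < 1) {e : ℕ → ℕ} (he : Function.Injective e) :
    Summable fun j => ‖z ^ e j‖ := by
  simpa only [norm_pow, Function.comp_def] using
    (summable_geometric_of_lt_one (norm_nonneg z) hz).comp_injective he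

lemma multipliable_one_sub_pow_comp (hz : ‖z‖ < 1) {e : ℕ → ℕ} (he : Function.Injective e) :
    Multipliable fun j => 1 - z ^ e j := by
  simpa only [← sub_eq_add_neg] using multipliable_one_add_of_summable (f := fun j => -z ^ e j)
    (by simpa only [norm_neg] using summable_norm_pow_comp hz he)

lemma summable_pow_natAbs {r : ℝ} (h₀ : 0 ≤ r) (h₁ : r < 1) :
    Summable fun m : ℤ => r ^ m.natAbs :=
  .of_nat_of_neg (by simpa using summable_geometric_of_lt_one h₀ h₁)
    (by simpa using summable_geometric_of_lt_one h₀ h₁)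

lemma norm_zpow_sq_le (hz : ‖z‖ ≤ 1) (m : ℤ) : ‖z ^ (m ^ 2)‖ ≤ ‖z‖ ^ m.natAbs := by
  rw [← Int.natAbs_sq, ← Nat.cast_pow, zpow_natCast, norm_pow]
  exact pow_le_pow_of_le_one (norm_nonneg z) hz (Nat.le_self_pow two_ne_zero _)

lemma one_sub_pow_succ_ne_zero (hz : ‖z‖ < 1) (j : ℕ) : 1 - z ^ (j + 1) ≠ 0 := by
  refine sub_ne_zero.mpr fun h => (pow_lt_one₀ (norm_nonneg z) hz j.succ_ne_zero).ne ?_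
  rw [← norm_pow, ← h, norm_one]

lemma qPochhammer_ne_zero (hz : ‖z‖ < 1) (n : ℕ) : qPochhammer z n ≠ 0 :=
  prod_ne_zero_iff.mpr fun j _ => one_sub_pow_succ_ne_zero hz j

lemma E_ne_zero (hz : ‖z‖ < 1) : E z ≠ 0 := by
  simpa only [E, ← sub_eq_add_neg] using tprod_one_add_ne_zero_of_summable
    (f := fun n => -z ^ (n + 1))
    (by simpa only [← sub_eq_add_neg] using one_sub_pow_succ_ne_zero hz)
    (by simpa only [norm_neg] using summable_norm_pow_comp hz (add_left_injective 1))

lemma tendsto_qPochhammer (hz : ‖z‖ < 1) : Tendsto (qPochhammer z) atTop (𝓝 (E z)) :=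
  (ModularForm.multipliable_one_sub_pow hz).hasProd.tendsto_prod_nat

lemma exists_norm_qBinomial_le (hz : ‖z‖ < 1) : ∃ C, ∀ n k, ‖qBinomial z n k‖ ≤ C := by
  obtain ⟨C₁, hC₁⟩ :=
    (Metric.isBounded_range_of_tendsto _ (tendsto_qPochhammer hz)).exists_norm_le
  obtain ⟨C₂, hC₂⟩ := (Metric.isBounded_range_of_tendsto _
    ((tendsto_qPochhammer hz).inv₀ (E_ne_zero hz))).exists_norm_le
  have hC₁' (n : ℕ) : ‖qPochhammer z n‖ ≤ C₁ := hC₁ _ ⟨n, rfl⟩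
  have hC₂' (n : ℕ) : ‖(qPochhammer z n)⁻¹‖ ≤ C₂ := hC₂ _ ⟨n, rfl⟩
  have hC₁₀ : 0 ≤ C₁ := (norm_nonneg _).trans (hC₁' 0)
  have hC₂₀ : 0 ≤ C₂ := (norm_nonneg _).trans (hC₂' 0)
  refine ⟨C₁ * C₂ * C₂, fun n k => ?_⟩
  rcases le_or_gt k n with hkn | hnk
  · obtain ⟨m, rfl⟩ := Nat.exists_eq_add_of_le' hkn
    rw [qBinomial_add_eq_div (qPochhammer_ne_zero hz k) (qPochhammer_ne_zero hz m),
      div_eq_mul_inv, mul_inv, ← mul_assoc]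
    refine (norm_mul_le _ _).trans (mul_le_mul ((norm_mul_le _ _).trans ?_) (hC₂' m)
      (norm_nonneg _) (mul_nonneg hC₁₀ hC₂₀))
    exact mul_le_mul (hC₁' _) (hC₂' k) (norm_nonneg _) hC₁₀
  · rw [qBinomial_eq_zero_of_lt z hnk, norm_zero]
    exact mul_nonneg (mul_nonneg hC₁₀ hC₂₀) hC₂₀

lemma tendsto_qBinomial {ι : Type*} {l : Filter ι} {a b : ι → ℕ} (hz : ‖z‖ < 1)
    (ha : Tendsto a l atTop) (hb : Tendsto b l atTop) :
    Tendsto (fun i => qBinomial z (b i + a i) (a i)) l (𝓝 (E z)⁻¹) := by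
  have hE := E_ne_zero hz
  have hP := tendsto_qPochhammer hz
  have hlim := (hP.comp (tendsto_atTop_mono (fun i => Nat.le_add_left (a i) (b i)) ha)).div
    ((hP.comp ha).mul (hP.comp hb)) (mul_ne_zero hE hE)
  rw [div_mul_eq_div_div, div_self hE, one_div] at hlim
  exact hlim.congr fun i =>
    (qBinomial_add_eq_div (qPochhammer_ne_zero hz _) (qPochhammer_ne_zero hz _)).symm

theorem phi_eq_sq_tprod_mul_E (hz : ‖z‖ < 1) :
    phi z = (∏' j : ℕ, (1 + z ^ (2 * j + 1))) ^ 2 * E (z ^ 2) := by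
  rcases eq_or_ne z 0 with rfl | hz0
  · rw [phi, tsum_eq_single 0 fun n hn => zero_zpow (n ^ 2) (pow_ne_zero 2 hn)]
    simp [E]
  have hQ : ‖z ^ 2‖ < 1 := by rw [norm_pow]; exact pow_lt_one₀ (norm_nonneg z) hz two_ne_zero
  obtain ⟨C, hC⟩ := exists_norm_qBinomial_le hQ
  let f (N : ℕ) (m : ℤ) : ℂ :=
    if m ∈ Icc (-N : ℤ) N then z ^ (m ^ 2) * qBinomial (z ^ 2) (2 * N) (m + N).toNat else 0
  have hsum (N : ℕ) : ∑' m, f N m = (∏ j ∈ range N, (1 + z ^ (2 * j + 1))) ^ 2 := by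
    rw [tsum_eq_sum fun m hm => if_neg hm, sq_prod_one_add_odd_pow_eq_sum hz0]
    exact sum_congr rfl fun m hm => if_pos hm
  have hlim (m : ℤ) : Tendsto (f · m) atTop (𝓝 (z ^ (m ^ 2) * (E (z ^ 2))⁻¹)) := by
    have hshift (c : ℤ) : Tendsto (fun N : ℕ => (c + N).toNat) atTop atTop :=
      tendsto_atTop_atTop.mpr fun b => ⟨b + c.natAbs, fun N hN => by omega⟩
    refine ((tendsto_qBinomial hQ (hshift m) (hshift (-m))).const_mul _).congr' ?_
    filter_upwards [eventually_ge_atTop m.natAbs] with N hN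
    have hmem : m ∈ Icc (-N : ℤ) N := mem_Icc.mpr ⟨by omega, by omega⟩
    simp only [f, if_pos hmem, show (-m + N).toNat + (m + N).toNat = 2 * N by omega]
  have hbound (N : ℕ) (m : ℤ) : ‖f N m‖ ≤ C * ‖z‖ ^ m.natAbs := by
    have hC₀ : 0 ≤ C := (norm_nonneg _).trans (hC 0 0)
    by_cases hm : m ∈ Icc (-N : ℤ) N
    · simp only [f, if_pos hm, norm_mul, mul_comm C]
      exact mul_le_mul (norm_zpow_sq_le hz.le m) (hC _ _) (norm_nonneg _) (by positivity)
    · simp only [f, if_neg hm, norm_zero]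
      positivity
  have htannery := tendsto_tsum_of_dominated_convergence
    ((summable_pow_natAbs (norm_nonneg z) hz).mul_left C) hlim (.of_forall hbound)
  simp only [hsum, tsum_mul_right] at htannery
  have hodd := (multipliable_one_add_of_summable (summable_norm_pow_comp hz
    (e := fun j => 2 * j + 1) fun a b h => by dsimp only at h; omega)).hasProd.tendsto_prod_nat
  rw [tendsto_nhds_unique (hodd.pow 2) htannery, inv_mul_cancel_right₀ (E_ne_zero hQ), phi]

lemma E_eq_tprod_odd_mul_E_sq (hz : ‖z‖ < 1) :
    E z = (∏' j : ℕ, (1 - z ^ (2 * j + 1))) * E (z ^ 2) := by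
  have hodd := multipliable_one_sub_pow_comp hz (e := fun k => 2 * k + 1)
    fun a b h => by dsimp only at h; omega
  have heven := multipliable_one_sub_pow_comp hz (e := fun k => 2 * k + 1 + 1)
    fun a b h => by dsimp only at h; omega
  rw [E, E, ← tprod_even_mul_odd (f := fun n => 1 - z ^ (n + 1)) hodd heven]
  congr 1
  exact tprod_congr fun k => by ring

end Complex

theorem phi_neg_eta_quotient (q : ℂ) (hq : ‖q‖ < 1) :
    phi (-q) = E q ^ 2 / E (q ^ 2) := by
  have hE : E (q ^ 2) ≠ 0 :=
    E_ne_zero (by rw [norm_pow]; exact pow_lt_one₀ (norm_nonneg q) hq two_ne_zero)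
  rw [phi_eq_sq_tprod_mul_E (by rwa [norm_neg]), E_eq_tprod_odd_mul_E_sq hq, neg_sq]
  simp_rw [Odd.neg_pow ⟨_, rfl⟩, ← sub_eq_add_neg]
  field_simp
end

section
/- Let m, k be positive integers and |q|<1. Then (1/2)·(∑_{x,y∈ℤ} q^{mx²+4ky²} − ∑_{x,y∈ℤ} q^{4mx²+4mxy+(k+m)y²}) = q^m · ψ(q^{8m}) · φ(−q^k), where ψ(q) = ∑_{n∈ℤ} q^{2n²−n} and φ(q) = ∑_{n∈ℤ} q^{n²}. -/
open scoped BigOperators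

/-!
Write `θ_c^r = ∑_{u ≡ r mod 2} q^{c u²}`. Since `m x² + 4k y² = m x² + k (2y)²` and
`4m x² + 4m xy + (k+m) y² = m (2x+y)² + k y²`, the two binary theta series are
`(θ_m^0 + θ_m^1) θ_k^0` and `θ_m^0 θ_k^0 + θ_m^1 θ_k^1`: in the second one the inner sum
over `x` only sees the parity of `y`. Their difference is
`θ_m^1 (θ_k^0 - θ_k^1) = θ_m^1 φ(-q^k)`, and splitting the odd squares into `(4n + 1)²` and
`(4n - 1)²`, which contribute equally, gives `θ_m^1 = 2 q^m ψ(q^{8m})` because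
`m (4n - 1)² = m + 8m (2n² - n)`.
-/

theorem HasSum.int_even_add_odd {M : Type*} [AddCommMonoid M] [TopologicalSpace M]
    [ContinuousAdd M] {f : ℤ → M} {a b : M} (he : HasSum (fun n ↦ f (2 * n)) a)
    (ho : HasSum (fun n ↦ f (2 * n + 1)) b) : HasSum f (a + b) := by
  have hinj := mul_right_injective₀ (two_ne_zero' ℤ)
  replace ho := ((add_left_injective 1).comp hinj).hasSum_range_iff.2 ho
  refine (hinj.hasSum_range_iff.2 he).add_isCompl ?_ ho
  simpa [Function.comp_def] using Int.isCompl_even_odd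

theorem tsum_int_eq_tsum_even_add_tsum_odd {G : Type*} [AddCommGroup G] [UniformSpace G]
    [IsUniformAddGroup G] [CompleteSpace G] [T2Space G] {f : ℤ → G} (hf : Summable f) :
    ∑' n, f n = ∑' n, f (2 * n) + ∑' n, f (2 * n + 1) := by
  have hinj := mul_right_injective₀ (two_ne_zero' ℤ)
  have he : Summable fun n ↦ f (2 * n) := hf.comp_injective hinj
  have ho : Summable fun n ↦ f (2 * n + 1) := hf.comp_injective ((add_left_injective 1).comp hinj)
  exact (he.hasSum.int_even_add_odd ho.hasSum).tsum_eq

theorem zpow_add_of_nonneg {G₀ : Type*} [GroupWithZero G₀] (a : G₀) {m n : ℤ} (hm : 0 ≤ m)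
    (hn : 0 ≤ n) : a ^ (m + n) = a ^ m * a ^ n :=
  zpow_add' (by omega)

theorem summable_norm_zpow_mul_sq {K : Type*} [NormedDivisionRing K] {q : K} (hq : ‖q‖ < 1)
    {c : ℤ} (hc : 0 < c) : Summable fun n : ℤ ↦ ‖q ^ (c * n ^ 2)‖ := by
  have hgeom : Summable fun n : ℤ ↦ ‖q‖ ^ n.natAbs := by
    apply Summable.of_nat_of_neg <;> simpa using summable_geometric_of_lt_one (norm_nonneg q) hq
  refine hgeom.of_nonneg_of_le (fun n ↦ norm_nonneg _) fun n ↦ ?_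
  have hexp : c * n ^ 2 = ((c.toNat * n.natAbs ^ 2 : ℕ) : ℤ) := by
    push_cast
    rw [Int.toNat_of_nonneg hc.le, sq_abs]
  rw [hexp, zpow_natCast, norm_pow]
  refine pow_le_pow_of_le_one (norm_nonneg q) hq.le ?_
  have : 1 ≤ c.toNat := by omega
  nlinarith [Nat.le_self_pow two_ne_zero n.natAbs]

noncomputable def thetaCoset (q : ℂ) (c r : ℤ) : ℂ := ∑' n : ℤ, q ^ (c * (2 * n + r) ^ 2)

section

variable {q : ℂ}

theorem summable_norm_thetaCoset_term (hq : ‖q‖ < 1) {c : ℤ} (hc : 0 < c) (r : ℤ) :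
    Summable fun n : ℤ ↦ ‖q ^ (c * (2 * n + r) ^ 2)‖ :=
  (summable_norm_zpow_mul_sq hq hc).comp_injective
    ((add_left_injective r).comp (mul_right_injective₀ two_ne_zero))

theorem hasSum_thetaCoset (hq : ‖q‖ < 1) {c : ℤ} (hc : 0 < c) (r : ℤ) :
    HasSum (fun n : ℤ ↦ q ^ (c * (2 * n + r) ^ 2)) (thetaCoset q c r) :=
  ((summable_norm_thetaCoset_term hq hc r).of_norm :).hasSum

theorem thetaCoset_two_mul_add (q : ℂ) (c r s : ℤ) :
    thetaCoset q c (2 * s + r) = thetaCoset q c r := by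
  rw [thetaCoset, thetaCoset, ← (Equiv.addRight s).tsum_eq fun n ↦ q ^ (c * (2 * n + r) ^ 2)]
  refine tsum_congr fun n ↦ ?_
  rw [Equiv.coe_addRight]
  ring_nf

theorem tsum_zpow_mul_sq_eq_thetaCoset_add (hq : ‖q‖ < 1) {c : ℤ} (hc : 0 < c) :
    ∑' n : ℤ, q ^ (c * n ^ 2) = thetaCoset q c 0 + thetaCoset q c 1 := by
  rw [tsum_int_eq_tsum_even_add_tsum_odd (summable_norm_zpow_mul_sq hq hc).of_norm, thetaCoset,
    thetaCoset]
  simp only [add_zero]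

theorem phi_neg_zpow_eq_thetaCoset_sub (hq : ‖q‖ < 1) {k : ℤ} (hk : 0 < k) :
    phi (-(q ^ k)) = thetaCoset q k 0 - thetaCoset q k 1 := by
  have heven : HasSum (fun n : ℤ ↦ (-(q ^ k)) ^ ((2 * n) ^ 2)) (thetaCoset q k 0) := by
    refine (hasSum_thetaCoset hq hk 0).congr_fun fun n ↦ ?_
    rw [Even.neg_zpow ⟨2 * n ^ 2, by ring⟩, ← zpow_mul, add_zero, mul_comm]
  have hodd : HasSum (fun n : ℤ ↦ (-(q ^ k)) ^ ((2 * n + 1) ^ 2)) (-thetaCoset q k 1) := by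
    refine (hasSum_thetaCoset hq hk 1).neg.congr_fun fun n ↦ ?_
    rw [Odd.neg_zpow ⟨2 * n ^ 2 + 2 * n, by ring⟩, ← zpow_mul, mul_comm]
  rw [phi, (heven.int_even_add_odd (f := fun n ↦ (-(q ^ k)) ^ (n ^ 2)) hodd).tsum_eq,
    sub_eq_add_neg]

theorem mul_psi_eq_tsum (q : ℂ) {m : ℤ} (hm : 0 ≤ m) :
    q ^ m * psi (q ^ (8 * m)) = ∑' n : ℤ, q ^ (m * (4 * n - 1) ^ 2) := by
  rw [psi, ← tsum_mul_left]
  refine tsum_congr fun n ↦ ?_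
  have : 0 ≤ 2 * n ^ 2 - n := by nlinarith
  rw [← zpow_mul, ← zpow_add_of_nonneg q hm (by positivity)]
  ring_nf

theorem thetaCoset_one_eq_two_mul_psi (hq : ‖q‖ < 1) {m : ℤ} (hm : 0 < m) :
    thetaCoset q m 1 = 2 * (q ^ m * psi (q ^ (8 * m))) := by
  rw [mul_psi_eq_tsum q hm.le, two_mul, thetaCoset,
    tsum_int_eq_tsum_even_add_tsum_odd (summable_norm_thetaCoset_term hq hm 1).of_norm]
  congr 1
  · rw [← (Equiv.neg ℤ).tsum_eq fun n ↦ q ^ (m * (4 * n - 1) ^ 2)]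
    refine tsum_congr fun n ↦ ?_
    rw [Equiv.neg_apply]
    ring_nf
  · rw [← (Equiv.addRight 1).tsum_eq fun n ↦ q ^ (m * (4 * n - 1) ^ 2)]
    refine tsum_congr fun n ↦ ?_
    rw [Equiv.coe_addRight]
    ring_nf

theorem tsum_zpow_mul_sq_add_four_mul_sq (hq : ‖q‖ < 1) {a b : ℤ} (ha : 0 < a) (hb : 0 < b) :
    ∑' p : ℤ × ℤ, q ^ (a * p.1 ^ 2 + 4 * b * p.2 ^ 2) =
      (thetaCoset q a 0 + thetaCoset q a 1) * thetaCoset q b 0 := by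
  rw [← tsum_zpow_mul_sq_eq_thetaCoset_add hq ha, thetaCoset, tsum_mul_tsum_of_summable_norm
    (summable_norm_zpow_mul_sq hq ha) (summable_norm_thetaCoset_term hq hb 0)]
  refine tsum_congr fun p ↦ ?_
  rw [← zpow_add_of_nonneg q (by positivity) (by positivity)]
  ring_nf

theorem tsum_zpow_sheared_form (hq : ‖q‖ < 1) {a b : ℤ} (ha : 0 < a) (hb : 0 < b) :
    ∑' p : ℤ × ℤ, q ^ (4 * a * p.1 ^ 2 + 4 * a * p.1 * p.2 + (b + a) * p.2 ^ 2) =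
      thetaCoset q a 0 * thetaCoset q b 0 + thetaCoset q a 1 * thetaCoset q b 1 := by
  have hshear : Function.Injective fun p : ℤ × ℤ ↦ (2 * p.1 + p.2, p.2) := fun p p' h ↦ by
    simp only [Prod.mk.injEq] at h
    exact Prod.ext (by omega) h.2
  have hG : Summable fun p : ℤ × ℤ ↦ q ^ (a * (2 * p.1 + p.2) ^ 2) * q ^ (b * p.2 ^ 2) :=
    (summable_mul_of_summable_norm (f := fun u : ℤ ↦ q ^ (a * u ^ 2))
      (g := fun v : ℤ ↦ q ^ (b * v ^ 2)) (summable_norm_zpow_mul_sq hq ha)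
      (summable_norm_zpow_mul_sq hq hb) |>.comp_injective hshear :)
  have heven : HasSum (fun y : ℤ ↦ thetaCoset q a (2 * y) * q ^ (b * (2 * y) ^ 2))
      (thetaCoset q a 0 * thetaCoset q b 0) :=
    ((hasSum_thetaCoset hq hb 0).mul_left _).congr_fun fun y ↦ by
      rw [add_zero, ← thetaCoset_two_mul_add q a 0 y, add_zero]
  have hodd : HasSum (fun y : ℤ ↦ thetaCoset q a (2 * y + 1) * q ^ (b * (2 * y + 1) ^ 2))
      (thetaCoset q a 1 * thetaCoset q b 1) :=
    ((hasSum_thetaCoset hq hb 1).mul_left _).congr_fun fun y ↦ by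
      rw [thetaCoset_two_mul_add q a 1 y]
  calc ∑' p : ℤ × ℤ, q ^ (4 * a * p.1 ^ 2 + 4 * a * p.1 * p.2 + (b + a) * p.2 ^ 2)
      = ∑' p : ℤ × ℤ, q ^ (a * (2 * p.1 + p.2) ^ 2) * q ^ (b * p.2 ^ 2) :=
        tsum_congr fun p ↦ by
          rw [← zpow_add_of_nonneg q (by positivity) (by positivity)]
          ring_nf
    _ = ∑' y : ℤ, ∑' x : ℤ, q ^ (a * (2 * x + y) ^ 2) * q ^ (b * y ^ 2) := by
        rw [hG.tsum_prod]
        exact hG.tsum_comm.symm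
    _ = ∑' y : ℤ, thetaCoset q a y * q ^ (b * y ^ 2) :=
        tsum_congr fun y ↦ by rw [thetaCoset, tsum_mul_right]
    _ = _ :=
        (heven.int_even_add_odd (f := fun y ↦ thetaCoset q a y * q ^ (b * y ^ 2)) hodd).tsum_eq

end

theorem thm_4m (m k : ℤ) (hm : 0 < m) (hk : 0 < k) (q : ℂ) (hq : ‖q‖ < 1) :
    (1 / 2 : ℂ) *
      ((∑' p : ℤ × ℤ, q ^ (m * p.1 ^ 2 + 4 * k * p.2 ^ 2)) -
        ∑' p : ℤ × ℤ, q ^ (4 * m * p.1 ^ 2 + 4 * m * p.1 * p.2 + (k + m) * p.2 ^ 2)) =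
      q ^ m * psi (q ^ (8 * m)) * phi (-(q ^ k)) := by
  rw [tsum_zpow_mul_sq_add_four_mul_sq hq hm hk, tsum_zpow_sheared_form hq hm hk,
    phi_neg_zpow_eq_thetaCoset_sub hq hk, thetaCoset_one_eq_two_mul_psi hq hm]
  ring
end
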